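/- arXiv:2111.12392 — 2 statements merged into one kernel-verified Lean document; each statement's English description precedes it below -/
import Mathlib

section
/- A system C = (1, c₂, c₃) with 1 < c₂ < c₃ is noncanonical if and only if 0 < r < c₂ - q, where c₃ = q·c₂ + r with 0 ≤ r < c₂. -/
open Finset

/-- `x` is a representation of value `v` in the coin system `c 1, …, c n`. -/
def IsRepr (n : ℕ) (c : ℕ → ℕ) (v : ℕ) (x : ℕ → ℕ) : Prop :=
  ∑ i ∈ Finset.Icc 1 n, c i * x i = v

/-- Minimum number of coins over all representations of `v`. -/
noncomputable def opt (n : ℕ) (c : ℕ → ℕ) (v : ℕ) : ℕ :=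
  sInf {k | ∃ x : ℕ → ℕ, IsRepr n c v x ∧ ∑ i ∈ Finset.Icc 1 n, x i = k}

/-- Number of coins used by the greedy algorithm to pay `v`. -/
def grd (n : ℕ) (c : ℕ → ℕ) (v : ℕ) : ℕ :=
  if hv : v = 0 then 0
  else
    let m := ((Finset.Icc 1 n).filter (fun i => c i ≤ v)).sup c
    if hm : 0 < m then grd n c (v - m) + 1 else 0
termination_by v
decreasing_by omega

/-- The system is canonical: greedy is optimal for every positive value. -/
def Canonical (n : ℕ) (c : ℕ → ℕ) : Prop :=
  ∀ v, 0 < v → opt n c v = grd n c v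

/-- `w` is a counterexample to the system. -/
def IsCex (n : ℕ) (c : ℕ → ℕ) (w : ℕ) : Prop :=
  0 < w ∧ opt n c w < grd n c w

/-- `w` is the minimum counterexample to the system. -/
def MinCex (n : ℕ) (c : ℕ → ℕ) (w : ℕ) : Prop :=
  IsCex n c w ∧ ∀ u, IsCex n c u → w ≤ u

/-- A (currency) system: first coin is `1` and coins strictly increase. -/
def IsSystem (n : ℕ) (c : ℕ → ℕ) : Prop :=
  c 1 = 1 ∧ StrictMonoOn c (Set.Icc 1 n)

/-!
Greedy pays `v` with `v / c₃` coins `c₃`, `v % c₃ / c₂` coins `c₂` and the rest in ones. This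
count `g` satisfies `g (v + c₁) ≤ g v + 1` and `g (v + c₃) = g v + 1`, and also
`g (v + c₂) ≤ g v + 1` unless `0 < r < c₂ - q`; when all three hold, `g` is at most the size of
every representation, so greedy is optimal. Otherwise `(q + 1) c₂ = c₃ + (c₂ - r)` costs `q + 1`
coins `c₂` but `1 + (c₂ - r)` greedy coins.
-/

section Representations

variable {n : ℕ} {c : ℕ → ℕ}

theorem opt_le_of_isRepr {v : ℕ} {x : ℕ → ℕ} (hx : IsRepr n c v x) :
    opt n c v ≤ ∑ i ∈ Icc 1 n, x i :=
  Nat.sInf_le ⟨x, hx, rfl⟩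

theorem exists_isRepr_sum_eq_opt (hn : 1 ≤ n) (h1 : c 1 = 1) (v : ℕ) :
    ∃ x, IsRepr n c v x ∧ ∑ i ∈ Icc 1 n, x i = opt n c v :=
  Nat.sInf_mem (s := {k | ∃ x : ℕ → ℕ, IsRepr n c v x ∧ ∑ i ∈ Icc 1 n, x i = k})
    ⟨v, fun i => if i = 1 then v else 0, by simp [IsRepr, mul_ite, h1, hn], by simp [hn]⟩

theorem IsCex.not_canonical {w : ℕ} (hw : IsCex n c w) : ¬ Canonical n c :=
  fun hc => hw.2.ne (hc w hw.1)

theorem grd_zero : grd n c 0 = 0 := by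
  rw [grd, dif_pos rfl]

theorem grd_eq_grd_sub_add_one {v i : ℕ} (hi : i ∈ Icc 1 n) (hci : 0 < c i) (hiv : c i ≤ v)
    (hmax : ∀ j ∈ Icc 1 n, c j ≤ v → c j ≤ c i) : grd n c v = grd n c (v - c i) + 1 := by
  have hsup : ((Icc 1 n).filter (fun j => c j ≤ v)).sup c = c i :=
    le_antisymm (Finset.sup_le fun j hj => hmax j (mem_filter.1 hj).1 (mem_filter.1 hj).2)
      (le_sup (mem_filter.2 ⟨hi, hiv⟩))
  rw [grd, dif_neg (by omega)]
  simp only [hsup, dif_pos hci]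

end Representations

theorem le_add_nsmul_of_forall_add_le {M : Type*} [AddMonoid M] {f : M → ℕ} {d : M}
    (h : ∀ v, f (v + d) ≤ f v + 1) (v : M) (k : ℕ) : f (v + k • d) ≤ f v + k := by
  induction k with
  | zero => simp
  | succ k ih =>
    calc f (v + (k + 1) • d) = f (v + k • d + d) := by rw [succ_nsmul, add_assoc]
      _ ≤ f v + (k + 1) := by grind

def grdThree (a b v : ℕ) : ℕ := v / b + v % b / a + v % b % a

section GrdThree

variable {a b : ℕ}

theorem grdThree_zero : grdThree a b 0 = 0 := by
  simp [grdThree]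

theorem grdThree_of_lt {v : ℕ} (hv : v < b) : grdThree a b v = v / a + v % a := by
  simp [grdThree, Nat.div_eq_of_lt hv, Nat.mod_eq_of_lt hv]

theorem grdThree_mul_add_mul_add {s d e : ℕ} (hu : a * d + e < b) (he : e < a) :
    grdThree a b (b * s + (a * d + e)) = s + d + e := by
  simp only [grdThree, Nat.mul_add_div (show 0 < b by omega), Nat.mul_add_mod,
    Nat.div_eq_of_lt hu, Nat.mod_eq_of_lt hu, Nat.mul_add_div (show 0 < a by omega),
    Nat.div_eq_of_lt he, Nat.mod_eq_of_lt he]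
  omega

theorem exists_eq_mul_add_mul_add (ha : 0 < a) (hb : 0 < b) (v : ℕ) :
    ∃ s d e, a * d + e < b ∧ e < a ∧ v = b * s + (a * d + e) :=
  ⟨v / b, v % b / a, v % b % a, by rw [Nat.div_add_mod]; exact Nat.mod_lt v hb,
    Nat.mod_lt _ ha, by rw [Nat.div_add_mod, Nat.div_add_mod]⟩

theorem grdThree_add_right (hb : 0 < b) (v : ℕ) : grdThree a b (v + b) = grdThree a b v + 1 := by
  simp only [grdThree, Nat.add_div_right v hb, Nat.add_mod_right]
  omega

theorem grdThree_add_one_le (ha : 0 < a) (hb : 0 < b) (v : ℕ) :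
    grdThree a b (v + 1) ≤ grdThree a b v + 1 := by
  obtain ⟨s, d, e, hu, he, rfl⟩ := exists_eq_mul_add_mul_add ha hb v
  rw [grdThree_mul_add_mul_add hu he]
  have := mul_add_one a d
  have := mul_add_one b s
  rcases (show a * d + e + 1 < b ∨ a * d + e + 1 = b by omega) with hu' | hu'
  · rcases (show e + 1 < a ∨ e + 1 = a by omega) with he' | he'
    · rw [show b * s + (a * d + e) + 1 = b * s + (a * d + (e + 1)) by omega,
        grdThree_mul_add_mul_add (by omega) he']
      omega
    · rw [show b * s + (a * d + e) + 1 = b * s + (a * (d + 1) + 0) by omega,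
        grdThree_mul_add_mul_add (by omega) ha]
      omega
  · rw [show b * s + (a * d + e) + 1 = b * (s + 1) + (a * 0 + 0) by omega,
      grdThree_mul_add_mul_add (by omega) ha]
    omega

theorem grdThree_add_left_le {q r : ℕ} (hb : 0 < b) (hqr : b = q * a + r) (hr : r < a)
    (h : r = 0 ∨ a ≤ q + r) (v : ℕ) : grdThree a b (v + a) ≤ grdThree a b v + 1 := by
  obtain ⟨s, d, e, hu, he, rfl⟩ := exists_eq_mul_add_mul_add (a := a) (by omega) hb v
  rw [grdThree_mul_add_mul_add hu he]
  have := mul_add_one a d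
  have := mul_add_one b s
  have hab : a ≤ b := by
    rcases Nat.eq_zero_or_pos q with rfl | hq
    · omega
    · have := Nat.le_mul_of_pos_left a hq
      omega
  by_cases hfit : a * (d + 1) + e < b
  · rw [show b * s + (a * d + e) + a = b * s + (a * (d + 1) + e) by omega,
      grdThree_mul_add_mul_add hfit he]
    omega
  rw [show b * s + (a * d + e) + a = b * (s + 1) + (a * 0 + (a * (d + 1) + e - b)) by omega,
    grdThree_mul_add_mul_add (by omega) (by omega)]
  have := mul_comm q a
  rcases Nat.lt_or_ge d q with hd | hd
  · have := Nat.mul_le_mul_left a (show d + 1 ≤ q by omega)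
    omega
  -- `a * d + e < b < a * (q + 1)` forces `d = q`, hence `e < r`.
  obtain rfl : d = q := le_antisymm
    (Nat.lt_succ_iff.1 (Nat.lt_of_mul_lt_mul_left (a := a) (by rw [Nat.mul_succ]; omega))) hd
  omega

theorem grdThree_le_add_mul_add_mul {q r : ℕ} (hb : 0 < b) (hqr : b = q * a + r) (hr : r < a)
    (h : r = 0 ∨ a ≤ q + r) (x₁ x₂ x₃ : ℕ) :
    grdThree a b (x₁ + x₂ * a + x₃ * b) ≤ x₁ + x₂ + x₃ := by
  have h₁ := le_add_nsmul_of_forall_add_le (grdThree_add_one_le (a := a) (by omega) hb) 0 x₁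
  have h₂ := le_add_nsmul_of_forall_add_le (grdThree_add_left_le hb hqr hr h) x₁ x₂
  have h₃ := le_add_nsmul_of_forall_add_le (fun v => (grdThree_add_right (a := a) hb v).le)
    (x₁ + x₂ * a) x₃
  simp only [smul_eq_mul, mul_one, zero_add, grdThree_zero] at h₁ h₂ h₃
  omega

end GrdThree

section ThreeCoins

variable {c : ℕ → ℕ}

theorem sum_Icc_one_three {M : Type*} [AddCommMonoid M] (g : ℕ → M) :
    ∑ i ∈ Icc 1 3, g i = g 1 + g 2 + g 3 := by
  simp [sum_Icc_succ_top]

theorem isRepr_three_iff {v : ℕ} {x : ℕ → ℕ} :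
    IsRepr 3 c v x ↔ c 1 * x 1 + c 2 * x 2 + c 3 * x 3 = v := by
  rw [IsRepr, sum_Icc_one_three]

theorem grd_three_eq (h1 : c 1 = 1) (h2 : 1 < c 2) (h3 : c 2 < c 3) (v : ℕ) :
    grd 3 c v = grdThree (c 2) (c 3) v := by
  induction v using Nat.strong_induction_on with | _ v ih => ?_
  have step : ∀ i ∈ Icc 1 3, c i ≤ v → (∀ j ∈ Icc 1 3, c j ≤ v → c j ≤ c i) →
      grd 3 c v = grdThree (c 2) (c 3) (v - c i) + 1 := fun i hi hiv hmax => by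
    have : 0 < c i := by obtain ⟨_, _⟩ := mem_Icc.1 hi; interval_cases i <;> omega
    rw [grd_eq_grd_sub_add_one hi this hiv hmax, ih _ (by omega)]
  rcases Nat.eq_zero_or_pos v with rfl | hv
  · rw [grd_zero, grdThree_zero]
  rcases Nat.lt_or_ge v (c 2) with hv2 | hv2
  · rw [step 1 (by simp) (by omega)
        (fun j hj _ => by obtain ⟨_, _⟩ := mem_Icc.1 hj; interval_cases j <;> omega),
      grdThree_of_lt (by omega), grdThree_of_lt (by omega), h1,
      Nat.div_eq_of_lt hv2, Nat.mod_eq_of_lt hv2, Nat.div_eq_of_lt (by omega : v - 1 < c 2),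
      Nat.mod_eq_of_lt (by omega : v - 1 < c 2)]
    omega
  rcases Nat.lt_or_ge v (c 3) with hv3 | hv3
  · rw [step 2 (by simp) hv2
        (fun j hj _ => by obtain ⟨_, _⟩ := mem_Icc.1 hj; interval_cases j <;> omega),
      grdThree_of_lt (by omega), grdThree_of_lt hv3, Nat.div_eq_sub_div (by omega) hv2,
      Nat.mod_eq_sub_mod hv2]
    omega
  · rw [step 3 (by simp) hv3
        (fun j hj _ => by obtain ⟨_, _⟩ := mem_Icc.1 hj; interval_cases j <;> omega),
      ← grdThree_add_right (by omega), Nat.sub_add_cancel hv3]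

theorem opt_three_le_grdThree (h1 : c 1 = 1) (v : ℕ) :
    opt 3 c v ≤ grdThree (c 2) (c 3) v := by
  let x : ℕ → ℕ := fun i =>
    if i = 1 then v % c 3 % c 2 else if i = 2 then v % c 3 / c 2 else v / c 3
  have hx : IsRepr 3 c v x := by
    simp only [isRepr_three_iff, x, h1, one_mul, reduceIte, Nat.reduceEqDiff]
    have := Nat.div_add_mod v (c 3)
    have := Nat.div_add_mod (v % c 3) (c 2)
    omega
  calc opt 3 c v ≤ ∑ i ∈ Icc 1 3, x i := opt_le_of_isRepr hx
    _ = grdThree (c 2) (c 3) v := by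
      simp only [sum_Icc_one_three, x, grdThree, reduceIte, Nat.reduceEqDiff]; omega

theorem grdThree_le_opt_three (h1 : c 1 = 1) (h3 : 0 < c 3) {q r : ℕ} (hqr : c 3 = q * c 2 + r)
    (hr : r < c 2) (h : r = 0 ∨ c 2 ≤ q + r) (v : ℕ) :
    grdThree (c 2) (c 3) v ≤ opt 3 c v := by
  obtain ⟨x, hx, hsum⟩ := exists_isRepr_sum_eq_opt (n := 3) (by norm_num) h1 v
  rw [isRepr_three_iff, h1, one_mul, mul_comm (c 2), mul_comm (c 3)] at hx
  rw [← hsum, sum_Icc_one_three, ← hx]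
  exact grdThree_le_add_mul_add_mul h3 hqr hr h _ _ _

theorem canonical_three (h1 : c 1 = 1) (h2 : 1 < c 2) (h3 : c 2 < c 3) {q r : ℕ}
    (hqr : c 3 = q * c 2 + r) (hr : r < c 2) (h : r = 0 ∨ c 2 ≤ q + r) : Canonical 3 c :=
  fun v _ => by
    rw [grd_three_eq h1 h2 h3]
    exact le_antisymm (opt_three_le_grdThree h1 v)
      (grdThree_le_opt_three h1 (by omega) hqr hr h v)

theorem isCex_three (h1 : c 1 = 1) (h2 : 1 < c 2) (h3 : c 2 < c 3) {q r : ℕ}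
    (hqr : c 3 = q * c 2 + r) (hr : 0 < r) (hsmall : q + r < c 2) :
    IsCex 3 c ((q + 1) * c 2) := by
  refine ⟨by positivity, ?_⟩
  have hopt : opt 3 c ((q + 1) * c 2) ≤ q + 1 := by
    have hx : IsRepr 3 c ((q + 1) * c 2) (fun i => if i = 2 then q + 1 else 0) := by
      simp [isRepr_three_iff, mul_comm]
    simpa [sum_Icc_one_three] using opt_le_of_isRepr hx
  have hsplit : (q + 1) * c 2 = c 3 * 1 + (c 2 * 0 + (c 2 - r)) := by
    rw [hqr, add_one_mul]
    omega
  have hgrd : grd 3 c ((q + 1) * c 2) = 1 + 0 + (c 2 - r) := by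
    rw [grd_three_eq h1 h2 h3, hsplit, grdThree_mul_add_mul_add (by omega) (by omega)]
  omega

end ThreeCoins

theorem three_coins_noncanonical_iff (c : ℕ → ℕ) (h1 : c 1 = 1) (h2 : 1 < c 2)
    (h3 : c 2 < c 3) (q r : ℕ) (hqr : c 3 = q * c 2 + r) (hr : r < c 2) :
    ¬ Canonical 3 c ↔ (0 < r ∧ r < c 2 - q) := by
  constructor
  · intro hnc
    by_contra hcond
    exact hnc (canonical_three h1 h2 h3 hqr hr (by omega))
  · rintro ⟨hr0, hrq⟩
    exact (isCex_three h1 h2 h3 hqr hr0 (by omega)).not_canonical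
end

section
/- Suppose C = (1, c₂, ..., cₙ) is canonical while the subsystem C' = (1, c₂, ..., c_{n-1}) is noncanonical, and let w' be the minimum counterexample to C'. Then cₙ ≤ w'. -/
open Finset

/-!
A value `v < c n` can contain the coin `c n` neither in its greedy representation nor in any
other one, so on such values `C` and `C'` have the same greedy and the same optimal coin counts.
A counterexample `w' < c n` of `C'` would therefore be one of the canonical system `C`.
-/

section

variable {n m : ℕ} {c : ℕ → ℕ} {v : ℕ}

lemma filter_Icc_le_eq_of_lt (hv : v < c n) :
    (Icc 1 n).filter (fun i => c i ≤ v) = (Icc 1 (n - 1)).filter (fun i => c i ≤ v) := by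
  ext i
  simp only [mem_filter, mem_Icc]
  constructor
  · rintro ⟨⟨h1, h2⟩, hi⟩
    have : i ≠ n := by rintro rfl; omega
    exact ⟨⟨h1, by omega⟩, hi⟩
  · rintro ⟨⟨h1, h2⟩, hi⟩
    exact ⟨⟨h1, by omega⟩, hi⟩

lemma grd_eq_grd_pred_of_lt (hv : v < c n) :
    grd n c v = grd (n - 1) c v := by
  induction v using Nat.strong_induction_on with
  | _ v ih =>
    rw [grd, grd, filter_Icc_le_eq_of_lt hv]
    by_cases hv0 : v = 0
    · simp only [hv0, dif_pos]
    simp only [hv0, dif_neg, not_false_iff]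
    set m := ((Icc 1 (n - 1)).filter (fun i => c i ≤ v)).sup c
    by_cases hm : 0 < m
    · have hmv : m ≤ v := Finset.sup_le fun i hi => (mem_filter.mp hi).2
      rw [dif_pos hm, dif_pos hm, ih (v - m) (by omega) (by omega)]
    · rw [dif_neg hm, dif_neg hm]

lemma opt_succ_eq_opt_of_lt (hv : v < c (m + 1)) :
    opt (m + 1) c v = opt m c v := by
  unfold opt
  congr 1
  ext k
  simp only [Set.mem_ofPred_eq, IsRepr, sum_Icc_succ_top (Nat.le_add_left 1 m)]
  constructor
  · rintro ⟨x, hx, hk⟩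
    have hx_top : x (m + 1) = 0 := by
      by_contra h
      have : c (m + 1) ≤ c (m + 1) * x (m + 1) := Nat.le_mul_of_pos_right _ (by omega)
      omega
    rw [hx_top] at hx hk
    exact ⟨x, by simpa using hx, by simpa using hk⟩
  · rintro ⟨x, hx, hk⟩
    have hx' : ∀ i ∈ Icc 1 m, Function.update x (m + 1) 0 i = x i := fun i hi =>
      Function.update_of_ne (by simp only [mem_Icc] at hi; omega) _ _
    refine ⟨Function.update x (m + 1) 0, ?_, ?_⟩ <;>
      simp only [sum_congr rfl hx', sum_congr rfl fun i hi => congrArg (c i * ·) (hx' i hi),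
        Function.update_self, mul_zero, add_zero, hx, hk]

lemma opt_eq_opt_pred_of_lt (hv : v < c n) :
    opt n c v = opt (n - 1) c v := by
  cases n with
  | zero => rfl
  | succ m => exact opt_succ_eq_opt_of_lt hv

lemma isCex_iff_isCex_pred_of_lt (hv : v < c n) :
    IsCex n c v ↔ IsCex (n - 1) c v := by
  rw [IsCex, IsCex, opt_eq_opt_pred_of_lt hv, grd_eq_grd_pred_of_lt hv]

lemma Canonical.not_isCex (hC : Canonical n c) (v : ℕ) :
    ¬ IsCex n c v := fun ⟨hv0, hlt⟩ => (hC v hv0).not_lt hlt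

end

theorem min_cex_of_subsystem_ge_general (n : ℕ) (c : ℕ → ℕ)
    (hC : Canonical n c)
    (w' : ℕ) (hw' : MinCex (n - 1) c w') :
    c n ≤ w' := by
  by_contra! hlt
  exact hC.not_isCex w' ((isCex_iff_isCex_pred_of_lt hlt).mpr hw'.1)

theorem min_cex_of_subsystem_ge (n : ℕ) (c : ℕ → ℕ) (hn : 2 ≤ n)
    (hsys : IsSystem n c) (hC : Canonical n c) (hC' : ¬ Canonical (n - 1) c)
    (w' : ℕ) (hw' : MinCex (n - 1) c w') :
    c n ≤ w' :=
  min_cex_of_subsystem_ge_general n c hC w' hw'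
end
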